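/- Let $T : \mathcal{B}(X) \to \mathcal{B}(X)$ be a contraction with modulus $\alpha \in (0,1)$ and let $\lambda \in [0,1)$. Then the operator $T^{(\lambda)}$ defined pointwise by $(T^{(\lambda)} J)(x) = (1-\lambda) \sum_{\ell=1}^\infty \lambda^{\ell-1} (T^\ell J)(x)$ is well-defined as a map $\mathcal{B}(X) \to \mathcal{B}(X)$ and is a contraction with modulus $\alpha_\lambda = \alpha(1-\lambda)/(1 - \lambda\alpha)$. -/

import Mathlib

open Filter Topology

noncomputable def wnorm {X : Type*} (v : X → ℝ) (J : X → ℝ) : ℝ := ⨆ x, |J x| / v x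

def memB {X : Type*} (v : X → ℝ) (J : X → ℝ) : Prop := ∃ C : ℝ, ∀ x, |J x| / v x ≤ C

/-- The λ-operator `(T^{(λ)}J)(x) = (1-λ) ∑_{ℓ=1}^∞ λ^{ℓ-1} (T^ℓ J)(x)`. -/
noncomputable def Tlam {X : Type*} (T : (X → ℝ) → (X → ℝ)) (lam : ℝ)
    (J : X → ℝ) : X → ℝ :=
  fun x => (1 - lam) * ∑' ℓ : ℕ, lam ^ ℓ * (T^[ℓ + 1] J) x

/-!
Every iterate satisfies `‖T^ℓ J - T^ℓ J'‖ ≤ α^ℓ ‖J - J'‖`, and the iterates `T^ℓ J` of one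
bounded `J` stay in a ball of radius `‖J‖ + ‖TJ - J‖ / (1 - α)`. So at each point the series
defining `T^{(λ)}J` is dominated by a geometric series, and bounding the difference series
term by term gives `(1 - λ) ∑ λ^ℓ α^{ℓ+1} ‖J - J'‖ = α (1 - λ) / (1 - λα) ‖J - J'‖`.
-/

section GeometricSeries

variable {r q C : ℝ} {a : ℕ → ℝ}

lemma norm_pow_mul_le_of_abs_le (hr : 0 ≤ r) (ha : ∀ n, |a n| ≤ C * q ^ n) (n : ℕ) :
    ‖r ^ n * a n‖ ≤ C * (r * q) ^ n := by
  rw [Real.norm_eq_abs, abs_mul, abs_pow, abs_of_nonneg hr, mul_pow, mul_left_comm]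
  exact mul_le_mul_of_nonneg_left (ha n) (pow_nonneg hr n)

lemma summable_pow_mul_of_abs_le (hr : 0 ≤ r) (hq : 0 ≤ q) (hrq : r * q < 1)
    (ha : ∀ n, |a n| ≤ C * q ^ n) : Summable fun n => r ^ n * a n :=
  Summable.of_norm_bounded (f := fun n => r ^ n * a n)
    ((summable_geometric_of_lt_one (mul_nonneg hr hq) hrq).mul_left C)
    (norm_pow_mul_le_of_abs_le hr ha)

lemma abs_tsum_pow_mul_le (hr : 0 ≤ r) (hq : 0 ≤ q) (hrq : r * q < 1)
    (ha : ∀ n, |a n| ≤ C * q ^ n) : |∑' n, r ^ n * a n| ≤ C / (1 - r * q) := by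
  rw [div_eq_mul_inv, ← Real.norm_eq_abs]
  exact tsum_of_norm_bounded ((hasSum_geometric_of_lt_one (mul_nonneg hr hq) hrq).mul_left C)
    (norm_pow_mul_le_of_abs_le hr ha)

end GeometricSeries

section WeightedSupNorm

variable {X : Type*} {v : X → ℝ} {J J' : X → ℝ}

lemma memB.bddAbove (hJ : memB v J) : BddAbove (Set.range fun x => |J x| / v x) := by
  obtain ⟨C, hC⟩ := hJ
  exact ⟨C, Set.forall_mem_range.2 hC⟩

lemma memB_of_abs_le_mul {C : ℝ} (hv : ∀ x, 0 < v x) (h : ∀ x, |J x| ≤ C * v x) :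
    memB v J :=
  ⟨C, fun x => (div_le_iff₀ (hv x)).2 (h x)⟩

lemma memB.sub (hv : ∀ x, 0 < v x) (hJ : memB v J) (hJ' : memB v J') :
    memB v fun x => J x - J' x := by
  obtain ⟨C, hC⟩ := hJ
  obtain ⟨C', hC'⟩ := hJ'
  refine memB_of_abs_le_mul (C := C + C') hv fun x => ?_
  have hJx := (div_le_iff₀ (hv x)).1 (hC x)
  have hJ'x := (div_le_iff₀ (hv x)).1 (hC' x)
  linarith [abs_sub (J x) (J' x)]

lemma wnorm_nonneg (hv : ∀ x, 0 < v x) : 0 ≤ wnorm v J :=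
  Real.iSup_nonneg fun x => div_nonneg (abs_nonneg _) (hv x).le

lemma abs_le_wnorm_mul (hv : ∀ x, 0 < v x) (hJ : memB v J) (x : X) :
    |J x| ≤ wnorm v J * v x :=
  (div_le_iff₀ (hv x)).1 (le_ciSup hJ.bddAbove x)

lemma wnorm_le_of_abs_le_mul {C : ℝ} (hv : ∀ x, 0 < v x) (hC : 0 ≤ C)
    (h : ∀ x, |J x| ≤ C * v x) : wnorm v J ≤ C :=
  Real.iSup_le (fun x => (div_le_iff₀ (hv x)).2 (h x)) hC

end WeightedSupNorm

structure IsWeightedContraction {X : Type*} (v : X → ℝ) (T : (X → ℝ) → (X → ℝ)) (α : ℝ) :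
    Prop where
  memB_apply : ∀ J, memB v J → memB v (T J)
  wnorm_sub_le : ∀ J J', memB v J → memB v J' →
    wnorm v (fun x => T J x - T J' x) ≤ α * wnorm v (fun x => J x - J' x)

namespace IsWeightedContraction

variable {X : Type*} {v : X → ℝ} {T : (X → ℝ) → (X → ℝ)} {α : ℝ} {J J' : X → ℝ}

lemma memB_iterate (hT : IsWeightedContraction v T α) (hJ : memB v J) (n : ℕ) :
    memB v (T^[n] J) := by
  induction n with
  | zero => exact hJ
  | succ n ih => rw [Function.iterate_succ_apply']; exact hT.memB_apply _ ih

lemma wnorm_iterate_sub_le (hT : IsWeightedContraction v T α) (hα : 0 ≤ α)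
    (hJ : memB v J) (hJ' : memB v J') (n : ℕ) :
    wnorm v (fun x => T^[n] J x - T^[n] J' x) ≤ α ^ n * wnorm v (fun x => J x - J' x) := by
  induction n with
  | zero => simp
  | succ n ih =>
    simp only [Function.iterate_succ_apply']
    calc _ ≤ α * wnorm v (fun x => T^[n] J x - T^[n] J' x) :=
          hT.wnorm_sub_le _ _ (hT.memB_iterate hJ n) (hT.memB_iterate hJ' n)
      _ ≤ α * (α ^ n * wnorm v (fun x => J x - J' x)) := by gcongr
      _ = α ^ (n + 1) * wnorm v (fun x => J x - J' x) := by ring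

lemma abs_iterate_sub_le (hT : IsWeightedContraction v T α) (hv : ∀ x, 0 < v x) (hα : 0 ≤ α)
    (hJ : memB v J) (hJ' : memB v J') (n : ℕ) (x : X) :
    |T^[n] J x - T^[n] J' x| ≤ α ^ n * wnorm v (fun x => J x - J' x) * v x :=
  (abs_le_wnorm_mul hv ((hT.memB_iterate hJ n).sub hv (hT.memB_iterate hJ' n)) x).trans
    (mul_le_mul_of_nonneg_right (hT.wnorm_iterate_sub_le hα hJ hJ' n) (hv x).le)

/-- The displacement `‖T^n J - J‖` satisfies `b (n+1) ≤ α b n + ‖TJ - J‖` (compare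
`T^{n+1} J` with `TJ`), so it never exceeds the fixed point `‖TJ - J‖ / (1 - α)`. -/
lemma wnorm_iterate_sub_self_le (hT : IsWeightedContraction v T α) (hv : ∀ x, 0 < v x)
    (hα : 0 ≤ α) (hα1 : α < 1) (hJ : memB v J) (n : ℕ) :
    wnorm v (fun x => T^[n] J x - J x) ≤ wnorm v (fun x => T J x - J x) / (1 - α) := by
  set c := wnorm v (fun x => T J x - J x)
  have hc : 0 ≤ c / (1 - α) := div_nonneg (wnorm_nonneg hv) (by linarith)
  induction n with
  | zero => exact wnorm_le_of_abs_le_mul hv hc fun x => by simpa using mul_nonneg hc (hv x).le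
  | succ n ih =>
    refine wnorm_le_of_abs_le_mul hv hc fun x => ?_
    have hstep := hT.abs_iterate_sub_le hv hα (hT.memB_iterate hJ n) hJ 1 x
    have hfirst := abs_le_wnorm_mul hv ((hT.memB_apply J hJ).sub hv hJ) x
    rw [Function.iterate_one, ← Function.iterate_succ_apply' T n J] at hstep
    have hfix : α * (c / (1 - α)) + c = c / (1 - α) := by
      field_simp [(sub_pos.2 hα1).ne']; ring
    calc |T^[n + 1] J x - J x| ≤ |T^[n + 1] J x - T J x| + |T J x - J x| := abs_sub_le _ _ _
      _ ≤ α * wnorm v (fun x => T^[n] J x - J x) * v x + c * v x := by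
          simpa using add_le_add hstep hfirst
      _ ≤ (α * (c / (1 - α)) + c) * v x := by
          rw [add_mul]; gcongr; exact (hv x).le
      _ = c / (1 - α) * v x := by rw [hfix]

lemma abs_iterate_le (hT : IsWeightedContraction v T α) (hv : ∀ x, 0 < v x) (hα : 0 ≤ α)
    (hα1 : α < 1) (hJ : memB v J) (n : ℕ) (x : X) :
    |T^[n] J x| ≤ (wnorm v J + wnorm v (fun x => T J x - J x) / (1 - α)) * v x := by
  have hdisp := (abs_le_wnorm_mul hv ((hT.memB_iterate hJ n).sub hv hJ) x).trans
    (mul_le_mul_of_nonneg_right (hT.wnorm_iterate_sub_self_le hv hα hα1 hJ n) (hv x).le)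
  have hJx := abs_le_wnorm_mul hv hJ x
  linarith [abs_sub_abs_le_abs_sub (T^[n] J x) (J x)]

lemma summable_pow_mul_iterate (hT : IsWeightedContraction v T α) (hv : ∀ x, 0 < v x)
    (hα : 0 ≤ α) (hα1 : α < 1) {lam : ℝ} (hlam : 0 ≤ lam) (hlam1 : lam < 1) (hJ : memB v J)
    (x : X) : Summable fun ℓ : ℕ => lam ^ ℓ * T^[ℓ + 1] J x :=
  summable_pow_mul_of_abs_le hlam zero_le_one (by rwa [mul_one]) fun ℓ => by
    rw [one_pow, mul_one]; exact hT.abs_iterate_le hv hα hα1 hJ (ℓ + 1) x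

lemma memB_Tlam (hT : IsWeightedContraction v T α) (hv : ∀ x, 0 < v x) (hα : 0 ≤ α)
    (hα1 : α < 1) {lam : ℝ} (hlam : 0 ≤ lam) (hlam1 : lam < 1) (hJ : memB v J) :
    memB v (Tlam T lam J) := by
  refine memB_of_abs_le_mul (C := wnorm v J + wnorm v (fun x => T J x - J x) / (1 - α)) hv
    fun x => ?_
  have hsum := abs_tsum_pow_mul_le hlam zero_le_one (by rwa [mul_one])
    (a := fun ℓ => T^[ℓ + 1] J x) fun ℓ => by
      rw [one_pow, mul_one]; exact hT.abs_iterate_le hv hα hα1 hJ (ℓ + 1) x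
  rw [Tlam, abs_mul, abs_of_pos (sub_pos.2 hlam1)]
  calc _ ≤ (1 - lam) * (_ / (1 - lam * 1)) := mul_le_mul_of_nonneg_left hsum (by linarith)
    _ = _ := by rw [mul_one]; field_simp [(sub_pos.2 hlam1).ne']

lemma Tlam_sub_Tlam (hT : IsWeightedContraction v T α) (hv : ∀ x, 0 < v x) (hα : 0 ≤ α)
    (hα1 : α < 1) {lam : ℝ} (hlam : 0 ≤ lam) (hlam1 : lam < 1) (hJ : memB v J)
    (hJ' : memB v J') (x : X) :
    Tlam T lam J x - Tlam T lam J' x =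
      (1 - lam) * ∑' ℓ : ℕ, lam ^ ℓ * (T^[ℓ + 1] J x - T^[ℓ + 1] J' x) := by
  simp only [Tlam, mul_sub]
  rw [← mul_sub, ← (hT.summable_pow_mul_iterate hv hα hα1 hlam hlam1 hJ x).tsum_sub
    (hT.summable_pow_mul_iterate hv hα hα1 hlam hlam1 hJ' x)]

lemma wnorm_Tlam_sub_le (hT : IsWeightedContraction v T α) (hv : ∀ x, 0 < v x) (hα : 0 ≤ α)
    (hα1 : α < 1) {lam : ℝ} (hlam : 0 ≤ lam) (hlam1 : lam < 1) (hJ : memB v J)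
    (hJ' : memB v J') :
    wnorm v (fun x => Tlam T lam J x - Tlam T lam J' x) ≤
      (α * (1 - lam) / (1 - lam * α)) * wnorm v (fun x => J x - J' x) := by
  set D := wnorm v (fun x => J x - J' x)
  have hlamα : lam * α < 1 := by nlinarith
  have hD : 0 ≤ D := wnorm_nonneg hv
  have hlamα' : 0 < 1 - lam * α := by linarith
  have h1lam : 0 ≤ 1 - lam := by linarith
  refine wnorm_le_of_abs_le_mul hv (by positivity) fun x => ?_
  have hsum := abs_tsum_pow_mul_le hlam hα hlamα (C := α * D * v x)
    (a := fun ℓ => T^[ℓ + 1] J x - T^[ℓ + 1] J' x) fun ℓ => by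
      have hterm := hT.abs_iterate_sub_le hv hα hJ hJ' (ℓ + 1) x
      rw [pow_succ] at hterm
      linarith
  rw [hT.Tlam_sub_Tlam hv hα hα1 hlam hlam1 hJ hJ', abs_mul, abs_of_pos (sub_pos.2 hlam1)]
  calc _ ≤ (1 - lam) * (α * D * v x / (1 - lam * α)) := mul_le_mul_of_nonneg_left hsum h1lam
    _ = _ := by ring

end IsWeightedContraction

theorem stmt6_general {X : Type*} (v : X → ℝ) (hv : ∀ x, 0 < v x)
    (T : (X → ℝ) → (X → ℝ)) (α : ℝ) (hα : α ∈ Set.Ioo (0 : ℝ) 1)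
    (hT : ∀ J, memB v J → memB v (T J))
    (hcontr : ∀ J J', memB v J → memB v J' →
      wnorm v (fun x => T J x - T J' x) ≤ α * wnorm v (fun x => J x - J' x))
    (lam : ℝ) (hlam : lam ∈ Set.Ico (0 : ℝ) 1) :
    (∀ J, memB v J → memB v (Tlam T lam J)) ∧
    ∀ J J', memB v J → memB v J' →
      wnorm v (fun x => Tlam T lam J x - Tlam T lam J' x) ≤
        (α * (1 - lam) / (1 - lam * α)) * wnorm v (fun x => J x - J' x) := by
  have hTα : IsWeightedContraction v T α := ⟨hT, hcontr⟩
  exact ⟨fun J hJ => hTα.memB_Tlam hv hα.1.le hα.2 hlam.1 hlam.2 hJ,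
    fun J J' hJ hJ' => hTα.wnorm_Tlam_sub_le hv hα.1.le hα.2 hlam.1 hlam.2 hJ hJ'⟩

/-- `T^{(λ)}` is well-defined `𝓑(X) → 𝓑(X)` and is a contraction
with modulus `α_λ = α(1-λ)/(1-λα)`. -/
theorem stmt6 {X : Type*} [Nonempty X] (v : X → ℝ) (hv : ∀ x, 0 < v x)
    (T : (X → ℝ) → (X → ℝ)) (α : ℝ) (hα : α ∈ Set.Ioo (0 : ℝ) 1)
    (hT : ∀ J, memB v J → memB v (T J))
    (hcontr : ∀ J J', memB v J → memB v J' →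
      wnorm v (fun x => T J x - T J' x) ≤ α * wnorm v (fun x => J x - J' x))
    (lam : ℝ) (hlam : lam ∈ Set.Ico (0 : ℝ) 1) :
    (∀ J, memB v J → memB v (Tlam T lam J)) ∧
    ∀ J J', memB v J → memB v J' →
      wnorm v (fun x => Tlam T lam J x - Tlam T lam J' x) ≤
        (α * (1 - lam) / (1 - lam * α)) * wnorm v (fun x => J x - J' x) :=
  stmt6_general v hv T α hα hT hcontr lam hlam
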